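/- If H is a connected graph with at least 2 vertices, then aw(P_2 □ H, 3) ≤ 4; that is, every exact 4-coloring of P_2 □ H contains a rainbow 3-AP. -/

import Mathlib

open SimpleGraph

/-- `v` lists the vertices of a `k`-term arithmetic progression in `G`:
consecutive vertices are at a common distance `d`. -/
def IsAPIn {V : Type*} (G : SimpleGraph V) (k : ℕ) (v : Fin k → V) : Prop :=
  ∃ d : ℕ, ∀ (i : ℕ) (h : i + 1 < k),
    G.dist (v ⟨i, by omega⟩) (v ⟨i + 1, h⟩) = d

/-- The coloring `c` admits a rainbow `k`-AP in `G`: a `k`-AP whose vertices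
are pairwise distinct and receive pairwise distinct colors. -/
def HasRainbowAP {V α : Type*} (G : SimpleGraph V) (k : ℕ) (c : V → α) : Prop :=
  ∃ v : Fin k → V, IsAPIn G k v ∧ Function.Injective (c ∘ v)

/-- The anti-van der Waerden number `aw(G,k)`: the least positive `r` such that
every exact `r`-coloring of `G` contains a rainbow `k`-AP.  (For `r = |V(G)|+1`
there is no surjection onto `r` colors, so the defining set is nonempty and
`aw(G,k) ≤ |V(G)|+1` automatically, matching the convention.) -/
noncomputable def aw {V : Type*} [Fintype V] (G : SimpleGraph V) (k : ℕ) : ℕ :=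
  sInf {r : ℕ | 0 < r ∧ ∀ c : V → Fin r, Function.Surjective c → HasRainbowAP G k c}

/-!
A colouring without rainbow 3-APs never gives three distinct colours to a vertex `m` and two
vertices `p`, `q` with `d(m, p) = d(m, q)`. In `P₂ □ H` the distance is `[i ≠ j] + d_H(x, y)`, so
for adjacent columns `W, W'` and any column `t`, some vertex of `t` is equidistant from a vertex
of `W` and a given vertex of `W'`.

If every column is monochromatic, the colour changes along some edge `W W'` of `H`, and these
equidistant vertices confine all colours to those of `W` and `W'`. Otherwise pick a bichromatic
column `g` and a vertex `(a, X)` whose colour is not on `g` with `d_H(g, X)` minimal. The columns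
strictly between them on a geodesic are monochromatic in colours of `g`; spreading from the first
one against `g`, and from the last one `W₂` against `(a, X)`, shows that every column avoiding the
colour `α` of `W₂` carries two different colours, and such columns propagate along edges, so `α`
meets every column. Then two vertices of one row with different colours other than `α` are at
odd distance (otherwise the `α`-vertex over a midpoint is equidistant from them); this excludes
three such colours in one row, and a third one in the other row can be moved into the first row.
-/

namespace SimpleGraph

variable {V W : Type*} {G : SimpleGraph V} {H : SimpleGraph W}

lemma Reachable.of_adj_imp {P : V → Prop} (hP : ∀ x y, G.Adj x y → P x → P y) {x y : V}
    (hxy : G.Reachable x y) (hx : P x) : P y := by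
  obtain ⟨p⟩ := hxy
  induction p with
  | nil => exact hx
  | cons hadj _ ih => exact ih (hP _ _ hadj hx)

lemma Reachable.exists_dist_eq_of_le {x y : V} (hxy : G.Reachable x y) {k : ℕ}
    (hk : k ≤ G.dist x y) : ∃ z, G.dist x z = k ∧ G.dist z y = G.dist x y - k := by
  obtain ⟨p, hp⟩ := hxy.exists_walk_length_eq_dist
  have hxz : G.dist x (p.getVert k) ≤ k := (dist_le (p.take k)).trans (by simp)
  have hzy : G.dist (p.getVert k) y ≤ G.dist x y - k := (dist_le (p.drop k)).trans (by simp [hp])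
  have := (p.drop k).reachable.dist_triangle_right x
  exact ⟨p.getVert k, by omega, by omega⟩

lemma dist_boxProd {x y : V × W} (hG : G.Reachable x.1 y.1) (hH : H.Reachable x.2 y.2) :
    (G □ H).dist x y = G.dist x.1 y.1 + H.dist x.2 y.2 := by
  rw [dist, edist_boxProd, ENat.toNat_add (edist_ne_top_iff_reachable.mpr hG)
    (edist_ne_top_iff_reachable.mpr hH)]
  rfl

lemma dist_pathGraph_two_boxProd (hH : H.Connected) (i j : Fin 2) (x y : W) :
    (pathGraph 2 □ H).dist (i, x) (j, y) = (if i = j then 0 else 1) + H.dist x y := by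
  rw [dist_boxProd ((pathGraph_connected 1).preconnected i j) (hH.preconnected x y),
    pathGraph_two_eq_top, dist_top]

end SimpleGraph

lemma hasRainbowAP_three_of_dist_eq {V κ : Type*} {G : SimpleGraph V} {c : V → κ} {m p q : V}
    (hd : G.dist m p = G.dist m q) (hpq : c p ≠ c q) (hmp : c m ≠ c p) (hmq : c m ≠ c q) :
    HasRainbowAP G 3 c := by
  refine ⟨![p, m, q], ⟨G.dist m p, fun i hi => ?_⟩, fun a b hab => ?_⟩
  · match i, hi with
    | 0, _ => exact dist_comm
    | 1, _ => exact hd.symm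
  · fin_cases a <;> fin_cases b <;> simp_all

lemma color_eq_or_eq_of_dist_eq {V κ : Type*} {G : SimpleGraph V} {c : V → κ} {m p q : V}
    (hc : ¬ HasRainbowAP G 3 c) (hd : G.dist m p = G.dist m q) (hmp : c m ≠ c p) :
    c q = c m ∨ c q = c p := by
  by_contra! h
  exact hc (hasRainbowAP_three_of_dist_eq hd (Ne.symm h.2) hmp (Ne.symm h.1))

namespace BoxProdPathTwo

lemma fin_two_eq_or_eq_add_one : ∀ i j : Fin 2, j = i ∨ j = i + 1 := by decide

lemma fin_two_add_one_add_one : ∀ i : Fin 2, i + 1 + 1 = i := by decide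

lemma fin_two_apply_ne_apply_add_one {β : Type*} {f : Fin 2 → β} (h : f 0 ≠ f 1) (i : Fin 2) :
    f i ≠ f (i + 1) := by
  fin_cases i
  · exact h
  · exact h.symm

lemma fin_two_apply_zero_ne_apply_one {β : Type*} {f : Fin 2 → β} {i j : Fin 2} (h : f i ≠ f j) :
    f 0 ≠ f 1 := by
  fin_cases i <;> fin_cases j <;> simp_all [eq_comm]

variable {V κ : Type*} {H : SimpleGraph V} {c : Fin 2 × V → κ}

lemma exists_dist_eq_of_adj (hH : H.Connected) {W W' : V} (hadj : H.Adj W W') (t : V)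
    (a : Fin 2) : ∃ j i : Fin 2,
      (pathGraph 2 □ H).dist (j, t) (i, W) = (pathGraph 2 □ H).dist (j, t) (a, W') := by
  have hWW' : H.dist W W' = 1 := dist_eq_one_iff_adj.mpr hadj
  have hW'W : H.dist W' W = 1 := dist_eq_one_iff_adj.mpr hadj.symm
  have := hH.dist_triangle (u := t) (v := W) (w := W')
  have := hH.dist_triangle (u := t) (v := W') (w := W)
  simp only [dist_pathGraph_two_boxProd hH]
  rcases (by omega : H.dist t W' = H.dist t W ∨ H.dist t W' = H.dist t W + 1 ∨
      H.dist t W = H.dist t W' + 1) with h | h | h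
  · exact ⟨a, a, by simp [h]⟩
  · exact ⟨a, a + 1, by simp [h]; omega⟩
  · exact ⟨a + 1, a + 1, by simp [h]; omega⟩

lemma exists_color_eq_or_eq_of_adj (hH : H.Connected)
    (hc : ¬ HasRainbowAP (pathGraph 2 □ H) 3 c) {W W' : V} (hW : c (0, W) = c (1, W))
    (hadj : H.Adj W W') {a : Fin 2} (hne : c (a, W') ≠ c (0, W)) (t : V) :
    ∃ j, c (j, t) = c (0, W) ∨ c (j, t) = c (a, W') := by
  by_contra! h
  obtain ⟨j, i, hd⟩ := exists_dist_eq_of_adj hH hadj t a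
  have hWi : c (i, W) = c (0, W) := by
    fin_cases i
    · rfl
    · exact hW.symm
  exact hc (hasRainbowAP_three_of_dist_eq hd (hWi ▸ hne.symm) (hWi ▸ (h j).1) (h j).2)

lemma exists_column_ne (hH : H.Connected) (hc : ¬ HasRainbowAP (pathGraph 2 □ H) 3 c)
    {u v w : Fin 2 × V} (huv : c u ≠ c v) (huw : c u ≠ c w) (hvw : c v ≠ c w) :
    ∃ x, c (0, x) ≠ c (1, x) := by
  by_contra! hmono
  have hcol : ∀ z : Fin 2 × V, c z = c (0, z.2) := by
    rintro ⟨i, x⟩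
    fin_cases i
    · rfl
    · exact (hmono x).symm
  obtain ⟨W, W', hadj, hne⟩ : ∃ W W', H.Adj W W' ∧ c (0, W') ≠ c (0, W) := by
    by_contra! hconst
    refine huv ?_
    rw [hcol u, hcol v]
    exact ((hH.preconnected u.2 v.2).of_adj_imp (P := fun y => c (0, y) = c (0, u.2))
      (fun x y hadj hx => (hconst x y hadj).trans hx) rfl).symm
  have htwo : ∀ z, c z = c (0, W) ∨ c z = c (0, W') := by
    intro z
    obtain ⟨j, hj⟩ := exists_color_eq_or_eq_of_adj hH hc (hmono W) hadj hne z.2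
    rwa [hcol z, ← hcol (j, z.2)]
  grind

lemma forall_exists_color_eq (hH : H.Connected) (hc : ¬ HasRainbowAP (pathGraph 2 □ H) 3 c)
    {α : κ} (hbi : ∀ y, (∀ j, c (j, y) ≠ α) → c (0, y) ≠ c (1, y)) {x₀ : V}
    (hx₀ : ∃ j, c (j, x₀) = α) (x : V) : ∃ j, c (j, x) = α := by
  by_contra! hx
  obtain ⟨j₀, hj₀⟩ := hx₀
  refine (hH.preconnected x x₀).of_adj_imp (P := fun y => ∀ j, c (j, y) ≠ α)
    (fun y y' hadj hy j hj => ?_) hx j₀ hj₀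
  have hd : (pathGraph 2 □ H).dist (j, y) (j + 1, y) = (pathGraph 2 □ H).dist (j, y) (j, y') := by
    simp [dist_pathGraph_two_boxProd hH, dist_eq_one_iff_adj.mpr hadj]
  exact hc (hasRainbowAP_three_of_dist_eq hd (hj ▸ hy (j + 1))
    (fin_two_apply_ne_apply_add_one (f := fun i => c (i, y)) (hbi y hy) j) (hj ▸ hy j))

lemma exists_forall_color_eq_of_minimal (hH : H.Connected)
    (hc : ¬ HasRainbowAP (pathGraph 2 □ H) 3 c) {g X : V} {a : Fin 2}
    (hg : c (0, g) ≠ c (1, g)) (hX : ∀ i, c (a, X) ≠ c (i, g))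
    (hmin : ∀ g' (z : Fin 2 × V), c (0, g') ≠ c (1, g') → (∀ i, c z ≠ c (i, g')) →
      H.dist g X ≤ H.dist g' z.2) :
    ∃ α, ∀ x, ∃ j, c (j, x) = α := by
  have hinner : ∀ w, H.dist g w < H.dist g X → H.dist w X < H.dist g X →
      c (0, w) = c (1, w) ∧ ∃ k, c (0, w) = c (k, g) := by
    intro w hgw hwX
    have hcol : ∀ i, ∃ k, c (i, w) = c (k, g) := by
      intro i
      by_contra! h
      exact (hmin g (i, w) hg h).not_gt hgw
    refine ⟨by_contra fun hw => (hmin w (a, X) hw fun i => ?_).not_gt hwX, hcol 0⟩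
    obtain ⟨k, hk⟩ := hcol i
    exact hk ▸ hX k
  have hm0 : H.dist g X ≠ 0 := fun h => hX a (by rw [hH.dist_eq_zero_iff.mp h])
  have hm1 : H.dist g X ≠ 1 := by
    intro h
    refine hc (hasRainbowAP_three_of_dist_eq (m := (a, g)) (p := (a + 1, g)) (q := (a, X))
      (by simp [dist_pathGraph_two_boxProd hH, h]) (hX _).symm
      (fin_two_apply_ne_apply_add_one (f := fun i => c (i, g)) hg a) (hX a).symm)
  obtain ⟨W₁, hgW₁, hW₁X⟩ := (hH.preconnected g X).exists_dist_eq_of_le (k := 1) (by omega)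
  obtain ⟨W₂, hgW₂, hW₂X⟩ :=
    (hH.preconnected g X).exists_dist_eq_of_le (k := H.dist g X - 1) (by omega)
  obtain ⟨hW₁, k₁, hk₁⟩ := hinner W₁ (by omega) (by omega)
  obtain ⟨hW₂, k₂, hk₂⟩ := hinner W₂ (by omega) (by omega)
  have hmeet_g : ∀ t, ∃ j k, c (j, t) = c (k, g) := by
    intro t
    obtain ⟨j, hj | hj⟩ := exists_color_eq_or_eq_of_adj hH hc hW₁
      (dist_eq_one_iff_adj.mp (dist_comm.trans hgW₁)) (a := k₁ + 1)
      (hk₁ ▸ (fin_two_apply_ne_apply_add_one (f := fun i => c (i, g)) hg k₁).symm) t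
    · exact ⟨j, k₁, hj.trans hk₁⟩
    · exact ⟨j, k₁ + 1, hj⟩
  have hmeet_X := exists_color_eq_or_eq_of_adj hH hc hW₂
    (dist_eq_one_iff_adj.mp (by omega)) (hk₂ ▸ hX k₂)
  refine ⟨c (0, W₂), forall_exists_color_eq hH hc (fun y hy => ?_) ⟨k₂, hk₂.symm⟩⟩
  obtain ⟨j, k, hjk⟩ := hmeet_g y
  obtain ⟨j', hj'⟩ := hmeet_X y
  refine fin_two_apply_zero_ne_apply_one (f := fun i => c (i, y)) (i := j) (j := j') ?_
  rw [hjk, hj'.resolve_left (hy j')]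
  exact (hX k).symm

lemma exists_forall_color_eq (hH : H.Connected) (hc : ¬ HasRainbowAP (pathGraph 2 □ H) 3 c)
    {g : V} (hg : c (0, g) ≠ c (1, g)) {z : Fin 2 × V} (hz : ∀ i, c z ≠ c (i, g)) :
    ∃ α, ∀ x, ∃ j, c (j, x) = α := by
  classical
  have hP : ∃ n, ∃ (g : V) (z : Fin 2 × V), c (0, g) ≠ c (1, g) ∧ (∀ i, c z ≠ c (i, g)) ∧
      H.dist g z.2 = n := ⟨_, g, z, hg, hz, rfl⟩
  obtain ⟨g, ⟨a, X⟩, hg, hX, hgX⟩ := Nat.find_spec hP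
  exact exists_forall_color_eq_of_minimal hH hc hg hX fun g' z' hg' hz' =>
    hgX ▸ Nat.find_min' hP ⟨g', z', hg', hz', rfl⟩

lemma apply_add_one_eq_of_ne {α : κ} (hα : ∀ x, ∃ j, c (j, x) = α) {i : Fin 2} {x : V}
    (h : c (i, x) ≠ α) : c (i + 1, x) = α := by
  obtain ⟨j, hj⟩ := hα x
  rcases fin_two_eq_or_eq_add_one i j with rfl | rfl
  · exact absurd hj h
  · exact hj

lemma apply_eq_of_add_one_ne {α : κ} (hα : ∀ x, ∃ j, c (j, x) = α) {i : Fin 2} {x : V}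
    (h : c (i + 1, x) ≠ α) : c (i, x) = α := by
  simpa only [fin_two_add_one_add_one] using apply_add_one_eq_of_ne hα h

lemma odd_dist_of_ne (hH : H.Connected) (hc : ¬ HasRainbowAP (pathGraph 2 □ H) 3 c)
    {α : κ} (hα : ∀ x, ∃ j, c (j, x) = α) {a : Fin 2} {x y : V}
    (hxy : c (a, x) ≠ c (a, y)) (hx : c (a, x) ≠ α) (hy : c (a, y) ≠ α) :
    Odd (H.dist x y) := by
  by_contra hodd
  obtain ⟨k, hk⟩ := Nat.not_odd_iff_even.mp hodd
  obtain ⟨M, hxM, hMy⟩ := (hH.preconnected x y).exists_dist_eq_of_le (k := k) (by omega)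
  obtain ⟨i, hi⟩ := hα M
  refine hc (hasRainbowAP_three_of_dist_eq (m := (i, M)) ?_ hxy (hi ▸ hx.symm) (hi ▸ hy.symm))
  rw [dist_pathGraph_two_boxProd hH, dist_pathGraph_two_boxProd hH, dist_comm (u := M), hxM, hMy]
  omega

lemma false_of_same_row (hH : H.Connected) (hc : ¬ HasRainbowAP (pathGraph 2 □ H) 3 c)
    {α : κ} (hα : ∀ x, ∃ j, c (j, x) = α) {a : Fin 2} {X Y Z : V}
    (hXY : c (a, X) ≠ c (a, Y)) (hXZ : c (a, X) ≠ c (a, Z)) (hYZ : c (a, Y) ≠ c (a, Z))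
    (hX : c (a, X) ≠ α) (hY : c (a, Y) ≠ α) (hZ : c (a, Z) ≠ α) : False := by
  wlog hle : H.dist Z X ≤ H.dist Z Y generalizing X Y
  · exact this hXY.symm hYZ hXZ hY hX (le_of_not_ge hle)
  obtain ⟨Q, hZQ, hdQY⟩ := (hH.preconnected Z Y).exists_dist_eq_of_le hle
  have hQ : c (a, Q) = c (a, Z) ∨ c (a, Q) = c (a, X) :=
    color_eq_or_eq_of_dist_eq hc (by simp [dist_pathGraph_two_boxProd hH, hZQ]) hXZ.symm
  have hZX := odd_dist_of_ne hH hc hα hXZ.symm hZ hX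
  have hZY := odd_dist_of_ne hH hc hα hYZ.symm hZ hY
  have hQY : Odd (H.dist Q Y) := by
    rcases hQ with h | h
    · exact odd_dist_of_ne hH hc hα (h ▸ hYZ.symm) (h ▸ hZ) hY
    · exact odd_dist_of_ne hH hc hα (h ▸ hXY) (h ▸ hX) hY
  rw [hdQY] at hQY
  exact Nat.not_even_iff_odd.mpr hQY (Nat.Odd.sub_odd hZY hZX)

lemma exists_color_eq_of_split_rows (hH : H.Connected)
    (hc : ¬ HasRainbowAP (pathGraph 2 □ H) 3 c) {α : κ} (hα : ∀ x, ∃ j, c (j, x) = α)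
    {a : Fin 2} {X Y Z : V} (hXY : c (a, X) ≠ c (a, Y)) (hXZ : c (a, X) ≠ c (a + 1, Z))
    (hYZ : c (a, Y) ≠ c (a + 1, Z)) (hX : c (a, X) ≠ α) (hY : c (a, Y) ≠ α)
    (hZ : c (a + 1, Z) ≠ α) : ∃ T, c (a, T) = c (a + 1, Z) := by
  wlog hlt : H.dist Z X < H.dist Z Y generalizing X Y
  · refine this hXY.symm hYZ hXZ hY hX (lt_of_le_of_ne (not_lt.mp hlt) fun h => ?_)
    exact hc (hasRainbowAP_three_of_dist_eq (m := (a + 1, Z)) (p := (a, X)) (q := (a, Y))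
      (by simp [dist_pathGraph_two_boxProd hH, h]) hXY hXZ.symm hYZ.symm)
  have hαZ : c (a, Z) = α := apply_eq_of_add_one_ne hα hZ
  obtain ⟨T₂, hZT₂, -⟩ := (hH.preconnected Z Y).exists_dist_eq_of_le hlt
  obtain ⟨T₁, hZT₁, hT₁T₂⟩ :=
    (hH.preconnected Z T₂).exists_dist_eq_of_le (k := H.dist Z X) (by omega)
  obtain ⟨T₀, hZT₀, hT₀T₂⟩ := (hH.preconnected Z T₂).exists_dist_eq_of_le (k := 1) (by omega)
  have h₁ : c (a, T₁) = c (a + 1, Z) ∨ c (a, T₁) = c (a, X) :=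
    color_eq_or_eq_of_dist_eq hc (by simp [dist_pathGraph_two_boxProd hH, hZT₁]) hXZ.symm
  have h₂ : c (a + 1, T₂) = c (a + 1, Z) ∨ c (a + 1, T₂) = c (a, X) :=
    color_eq_or_eq_of_dist_eq hc (by simp [dist_pathGraph_two_boxProd hH, hZT₂]; omega) hXZ.symm
  have hT₁' : c (a, T₁) ≠ α := by rcases h₁ with h | h <;> rw [h] <;> assumption
  have hT₁ : c (a + 1, T₁) = α := apply_add_one_eq_of_ne hα hT₁'
  have hT₂ : c (a + 1, T₂) ≠ α := by rcases h₂ with h | h <;> rw [h] <;> assumption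
  have hs : c (a + 1, T₂) = c (a, T₁) :=
    (color_eq_or_eq_of_dist_eq hc (m := (a + 1, T₁)) (p := (a, T₁))
      (by simp [dist_pathGraph_two_boxProd hH]; omega) (hT₁ ▸ hT₁'.symm)).resolve_left
      (hT₁ ▸ hT₂)
  -- Either `T₁` already carries `c (a + 1, Z)` in row `a`, or `c (a + 1, T₂) = c (a, X)` and
  -- then the neighbour `T₀` of `Z` towards `T₂` does.
  rcases h₁ with hσ | hβ
  · exact ⟨T₁, hσ⟩
  have h₀ : c (a, T₀) = c (a + 1, T₂) ∨ c (a, T₀) = c (a + 1, Z) :=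
    color_eq_or_eq_of_dist_eq hc (m := (a + 1, T₂)) (p := (a + 1, Z))
      (by simp [dist_pathGraph_two_boxProd hH, dist_comm (u := T₂), hZT₂, hT₀T₂]; omega)
      (hs ▸ hβ ▸ hXZ)
  have h₀' : c (a, T₀) = c (a, Z) ∨ c (a, T₀) = c (a + 1, Z) :=
    color_eq_or_eq_of_dist_eq hc (m := (a, Z)) (p := (a + 1, Z))
      (by simp [dist_pathGraph_two_boxProd hH, hZT₀]) (hαZ ▸ hZ.symm)
  refine ⟨T₀, h₀.resolve_left fun h => ?_⟩
  rcases h₀' with h' | h'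
  · exact hX (hβ ▸ hs ▸ h ▸ h'.trans hαZ)
  · exact hXZ (hβ ▸ hs ▸ h ▸ h')

lemma false_of_three_colors (hH : H.Connected) (hc : ¬ HasRainbowAP (pathGraph 2 □ H) 3 c)
    {α : κ} (hα : ∀ x, ∃ j, c (j, x) = α) {u v w : Fin 2 × V}
    (huv : c u ≠ c v) (huw : c u ≠ c w) (hvw : c v ≠ c w)
    (hu : c u ≠ α) (hv : c v ≠ α) (hw : c w ≠ α) : False := by
  wlog hrow : u.1 = v.1 generalizing u v w
  · rcases (by decide : ∀ i j k : Fin 2, i = j ∨ i = k ∨ j = k) u.1 v.1 w.1 with h | h | h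
    · exact hrow h
    · exact this huw huv hvw.symm hu hw hv h
    · exact this hvw huv.symm huw.symm hv hw hu h
  obtain ⟨a, X⟩ := u
  obtain ⟨b, Y⟩ := v
  obtain ⟨b', Z⟩ := w
  obtain rfl : a = b := hrow
  rcases fin_two_eq_or_eq_add_one a b' with rfl | rfl
  · exact false_of_same_row hH hc hα huv huw hvw hu hv hw
  · obtain ⟨T, hT⟩ := exists_color_eq_of_split_rows hH hc hα huv huw hvw hu hv hw
    exact false_of_same_row hH hc hα huv (hT ▸ huw) (hT ▸ hvw) hu hv (hT ▸ hw)

end BoxProdPathTwo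

open BoxProdPathTwo

theorem aw_p2_H_le_four_general {VH : Type*} [Fintype VH] (H : SimpleGraph VH)
    (hH : H.Connected) :
    aw (pathGraph 2 □ H) 3 ≤ 4 := by
  refine Nat.sInf_le ⟨by norm_num, fun c hsurj => by_contra fun hc => ?_⟩
  obtain ⟨g, hg⟩ : ∃ x, c (0, x) ≠ c (1, x) := by
    obtain ⟨u, hu⟩ := hsurj 0
    obtain ⟨v, hv⟩ := hsurj 1
    obtain ⟨w, hw⟩ := hsurj 2
    exact exists_column_ne hH hc (u := u) (v := v) (w := w) (by simp [hu, hv])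
      (by simp [hu, hw]) (by simp [hv, hw])
  obtain ⟨k, hk⟩ := (by decide : ∀ p q : Fin 4, ∃ k, k ≠ p ∧ k ≠ q) (c (0, g)) (c (1, g))
  obtain ⟨z, hz⟩ := hsurj k
  obtain ⟨α, hα⟩ := exists_forall_color_eq hH hc hg (z := z) (by simp [Fin.forall_fin_two, hz, hk])
  obtain ⟨k₁, k₂, k₃, hk⟩ := (by decide : ∀ α : Fin 4, ∃ k₁ k₂ k₃ : Fin 4,
    k₁ ≠ k₂ ∧ k₁ ≠ k₃ ∧ k₂ ≠ k₃ ∧ k₁ ≠ α ∧ k₂ ≠ α ∧ k₃ ≠ α) α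
  obtain ⟨u, rfl⟩ := hsurj k₁
  obtain ⟨v, rfl⟩ := hsurj k₂
  obtain ⟨w, rfl⟩ := hsurj k₃
  exact false_of_three_colors hH hc hα hk.1 hk.2.1 hk.2.2.1 hk.2.2.2.1 hk.2.2.2.2.1 hk.2.2.2.2.2

/-- if `H` is connected with at least two vertices, then
`aw(P_2 □ H, 3) ≤ 4`. -/
theorem aw_p2_H_le_four {VH : Type*} [Fintype VH] (H : SimpleGraph VH)
    (hH : H.Connected) (h2 : 2 ≤ Fintype.card VH) :
    aw (pathGraph 2 □ H) 3 ≤ 4 :=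
  aw_p2_H_le_four_general H hH
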